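/- In the ring A = Z_3[[a_1, b_1, a_2, b_2]]/(a_1 b_1 - 3, a_2 b_2 - 3), the ideal P generated by the images of a_1 and a_2 is a prime ideal. -/

import Mathlib

/-! The ring `A = ℤ₃[[a₁, b₁, a₂, b₂]] / (a₁b₁ - 3, a₂b₂ - 3)`, where `ℤ₃ = ℤ_[3]` is the
ring of 3-adic integers: the completed local ring of the family of compactified jacobians
at the point `[I]`, `I = ν⁎𝒪(-2)`, in Kass's example. -/

/-- The formal power series ring `ℤ₃[[a₁, b₁, a₂, b₂]]` in four variables over the
3-adic integers. -/
abbrev B : Type := MvPowerSeries (Fin 4) ℤ_[3]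

/-- The ideal `(a₁b₁ - 3, a₂b₂ - 3)` of `ℤ₃[[a₁, b₁, a₂, b₂]]`, where `a₁, b₁, a₂, b₂`
are the four variables. -/
noncomputable abbrev relIdeal : Ideal B :=
  Ideal.span {MvPowerSeries.X 0 * MvPowerSeries.X 1 - 3,
    MvPowerSeries.X 2 * MvPowerSeries.X 3 - 3}

/-- The ring `A = ℤ₃[[a₁, b₁, a₂, b₂]] / (a₁b₁ - 3, a₂b₂ - 3)`. -/
abbrev A : Type := B ⧸ relIdeal

/-- The image `a₁` in `A` of the first variable. -/
noncomputable def a1 : A := Ideal.Quotient.mk relIdeal (MvPowerSeries.X 0)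

/-- The image `b₁` in `A` of the second variable. -/
noncomputable def b1 : A := Ideal.Quotient.mk relIdeal (MvPowerSeries.X 1)

/-- The image `a₂` in `A` of the third variable. -/
noncomputable def a2 : A := Ideal.Quotient.mk relIdeal (MvPowerSeries.X 2)

/-- The image `b₂` in `A` of the fourth variable. -/
noncomputable def b2 : A := Ideal.Quotient.mk relIdeal (MvPowerSeries.X 3)

/-! Since `3 = a₁b₁`, the ideal `P` is the image in `A` of `J = (3, a₁, a₂)`, which contains
`(a₁b₁ - 3, a₂b₂ - 3)`; so it suffices that `J` is prime in `ℤ₃[[a₁, b₁, a₂, b₂]]`. And `J` is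
the kernel of the surjection onto the domain `𝔽₃[[b₁, b₂]]` that sets `a₁ = a₂ = 0` and
reduces modulo `3`. -/

open MvPowerSeries

theorem RingHom.ker_comp_of_ker_eq_map {R S T : Type*} [Ring R] [Ring S] [Semiring T]
    {f : R →+* S} (hf : Function.Surjective f) {g : S →+* T} {I : Ideal R}
    (hg : RingHom.ker g = I.map f) : RingHom.ker (g.comp f) = I ⊔ RingHom.ker f := by
  rw [← RingHom.comap_ker, hg, Ideal.comap_map_of_surjective f hf, RingHom.ker_eq_comap_bot]

namespace MvPowerSeries

variable {σ τ R : Type*}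

theorem killCompl_surjective [CommSemiring R] (e : σ ↪ τ) :
    Function.Surjective (killCompl (R := R) e) :=
  fun p => ⟨rename e p, killCompl_rename_app (e := e) p⟩

theorem ker_killCompl_of_range_eq [CommSemiring R] (e : σ ↪ τ) {i : τ}
    (he : Set.range e = {i}ᶜ) : RingHom.ker (killCompl (R := R) e) = Ideal.span {X i} := by
  ext f
  rw [RingHom.mem_ker, Ideal.mem_span_singleton, X_dvd_iff]
  constructor
  · intro hf m hm
    obtain ⟨n, rfl⟩ : m ∈ Set.range (Finsupp.embDomain e) := by
      rw [Finsupp.mem_range_embDomain_iff, he]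
      rintro j hj rfl
      exact Finsupp.mem_support_iff.mp hj hm
    rw [← coeff_killCompl, hf, map_zero]
  · intro hf
    ext n
    rw [coeff_killCompl, hf _ (Finsupp.embDomain_of_notMem_range _ _ _ (by simp [he])), map_zero]

theorem ker_map_of_ker_eq_span_singleton [CommRing R] {S : Type*} [Semiring S] (φ : R →+* S)
    {r : R} (hφ : RingHom.ker φ = Ideal.span {r}) :
    RingHom.ker (map (σ := σ) φ) = Ideal.span {C r} := by
  ext f
  rw [RingHom.mem_ker, Ideal.mem_span_singleton]
  constructor
  · intro hf
    have hdvd (d : σ →₀ ℕ) : r ∣ coeff d f := by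
      rw [← Ideal.mem_span_singleton, ← hφ, RingHom.mem_ker, ← coeff_map, hf, map_zero]
    choose g hg using hdvd
    exact ⟨show MvPowerSeries σ R from g, by ext d; rw [coeff_C_mul]; exact hg d⟩
  · rintro ⟨g, rfl⟩
    have hr : φ r = 0 := by rw [← RingHom.mem_ker, hφ]; exact Ideal.mem_span_singleton_self r
    rw [map_mul, map_C, hr, map_zero, zero_mul]

end MvPowerSeries

/-- `Fin.succAboveEmb 2` omits `a₂`, then `Fin.succAboveEmb 0` omits `a₁`, leaving `b₁, b₂`. -/
noncomputable def killA : B →+* MvPowerSeries (Fin 2) ℤ_[3] :=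
  (killCompl (Fin.succAboveEmb (0 : Fin 3))).toRingHom.comp
    (killCompl (Fin.succAboveEmb (2 : Fin 4))).toRingHom

theorem killA_surjective : Function.Surjective killA :=
  (killCompl_surjective _).comp (killCompl_surjective _)

theorem ker_killA : RingHom.ker killA = Ideal.span {X 0} ⊔ Ideal.span {X 2} := by
  have hker0 : RingHom.ker (killCompl (R := ℤ_[3]) (Fin.succAboveEmb (0 : Fin 3))).toRingHom =
      Ideal.span {X 0} :=
    ker_killCompl_of_range_eq _ (Fin.range_succAbove 0)
  have hker2 : RingHom.ker (killCompl (R := ℤ_[3]) (Fin.succAboveEmb (2 : Fin 4))).toRingHom =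
      Ideal.span {X 2} :=
    ker_killCompl_of_range_eq _ (Fin.range_succAbove 2)
  have hX0 : (killCompl (Fin.succAboveEmb (2 : Fin 4))).toRingHom (X 0 : B) = X 0 :=
    killCompl_X 0
  have hker0_eq_map : RingHom.ker (killCompl (R := ℤ_[3]) (Fin.succAboveEmb (0 : Fin 3))).toRingHom =
      (Ideal.span {X 0} : Ideal B).map (killCompl (Fin.succAboveEmb (2 : Fin 4))).toRingHom := by
    rw [hker0, Ideal.map_span, Set.image_singleton, hX0]
  rw [killA, RingHom.ker_comp_of_ker_eq_map (killCompl_surjective _) hker0_eq_map, hker2]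

noncomputable def reduceKillA : B →+* MvPowerSeries (Fin 2) (ZMod 3) :=
  (map PadicInt.toZMod).comp killA

theorem ker_reduceKillA : RingHom.ker reduceKillA = Ideal.span {3, X 0, X 2} := by
  have hmap : RingHom.ker (map (σ := Fin 2) (PadicInt.toZMod (p := 3))) =
      (Ideal.span {3} : Ideal B).map killA := by
    rw [ker_map_of_ker_eq_span_singleton _
        (by rw [PadicInt.ker_toZMod, PadicInt.maximalIdeal_eq_span_p]),
      Ideal.map_span, Set.image_singleton, map_natCast, map_ofNat, Nat.cast_ofNat]
  rw [reduceKillA, RingHom.ker_comp_of_ker_eq_map killA_surjective hmap, ker_killA,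
    Ideal.span_insert, Ideal.span_insert]

theorem span_three_X_zero_X_two_isPrime : (Ideal.span {3, X 0, X 2} : Ideal B).IsPrime := by
  have : IsDomain (MvPowerSeries (Fin 2) (ZMod 3)) := NoZeroDivisors.to_isDomain _
  exact ker_reduceKillA ▸ RingHom.ker_isPrime reduceKillA

theorem relIdeal_le_span_three_X_zero_X_two : relIdeal ≤ Ideal.span {3, X 0, X 2} := by
  rw [Ideal.span_le]
  rintro x (rfl | rfl) <;>
    exact Ideal.sub_mem _ (Ideal.mul_mem_right _ _ (Ideal.subset_span (by simp)))
      (Ideal.subset_span (by simp))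

theorem mk_three_eq_a1_mul_b1 : Ideal.Quotient.mk relIdeal 3 = a1 * b1 := by
  rw [a1, b1, ← map_mul, Ideal.Quotient.eq, ← neg_sub]
  exact neg_mem (Ideal.subset_span (by simp))

/-- In `A`, the ideal `P = (a₁, a₂)` generated by the images of `a₁` and `a₂` is a
prime ideal. -/
theorem span_a1_a2_isPrime : (Ideal.span {a1, a2} : Ideal A).IsPrime := by
  have hP : Ideal.span {a1, a2} =
      (Ideal.span {3, X 0, X 2} : Ideal B).map (Ideal.Quotient.mk relIdeal) := by
    rw [Ideal.map_span, Set.image_insert_eq, Set.image_insert_eq, Set.image_singleton,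
      mk_three_eq_a1_mul_b1]
    exact (Submodule.span_insert_eq_span
      (Ideal.mul_mem_right _ _ (Ideal.subset_span (by simp)))).symm
  have := span_three_X_zero_X_two_isPrime
  rw [hP]
  exact Ideal.map_isPrime_of_surjective Ideal.Quotient.mk_surjective
    (by rw [Ideal.mk_ker]; exact relIdeal_le_span_three_X_zero_X_two)
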